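/- Every JSBAF (satisfying the structural restrictions) has at least one admissible labeling. -/

import Mathlib

/-!
The witness is the labeling `SIM`: the strict arguments are IN, the arguments of `simOut` are OUT,
and the rest is UNDEC. Strict arguments are unattacked and strictly preferred over all others, so
a support set in which a strict argument is minimal consists of strict arguments and supports a
strict, hence IN, argument. For OUT, an argument enters `simO J (n + 1)` through a support whose
other members are strict and whose head is already in `simO J n`; unwinding this down to stage
`0`, where the head is attacked by a strict argument, produces exactly a legal-OUT support chain,
and conversely such a chain of length `n` puts its first link into `simO J (n + 1)`.
-/

namespace JS

inductive Lab : Type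
  | IN | OUT | UNDEC
deriving DecidableEq

structure JSBAF (A : Type) where
  att : A → A → Prop
  supp : Set A → A → Prop
  pref : A → A → Prop

variable {A : Type}

/-- Strict arguments: supported by the empty set or only by strict arguments. -/
inductive Strict (J : JSBAF A) : A → Prop
  | mk (S : Set A) (a : A) (h : J.supp S a) (hS : ∀ b ∈ S, Strict J b) : Strict J a

/-- Structural restrictions on JSBAFs. -/
structure Restr (J : JSBAF A) : Prop where
  finSupp : ∀ S b, J.supp S b → S.Finite
  uniqSupp : ∀ S S' b, J.supp S b → J.supp S' b → S = S'
  acyc : ∀ a, ¬ Relation.TransGen (fun x y => ∃ S, J.supp S y ∧ x ∈ S) a a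
  strictUnatt : ∀ a b, Strict J b → ¬ J.att a b
  prefRefl : ∀ a, J.pref a a
  prefTrans : ∀ a b c, J.pref a b → J.pref b c → J.pref a c
  prefTotal : ∀ a b, J.pref a b ∨ J.pref b a
  strictEq : ∀ a b, Strict J a → Strict J b → J.pref a b
  strictTop : ∀ a b, ¬ Strict J a → Strict J b → J.pref a b ∧ ¬ J.pref b a

def inL (L : A → Lab) : Set A := {a | L a = Lab.IN}
def outL (L : A → Lab) : Set A := {a | L a = Lab.OUT}
def undecL (L : A → Lab) : Set A := {a | L a = Lab.UNDEC}

/-- Definition 2, item 1: legally IN. -/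
def legallyIn (J : JSBAF A) (L : A → Lab) (a : A) : Prop :=
  (∀ b, J.att b a → L b = Lab.OUT) ∧
  ∀ S c, J.supp S c → a ∈ S → (∀ b ∈ S, b ≠ a → J.pref a b) →
    (L c = Lab.IN ∨
     (L c = Lab.UNDEC ∧ ∃ b ∈ S, b ≠ a ∧ (L b = Lab.OUT ∨ L b = Lab.UNDEC)) ∨
     (L c = Lab.OUT ∧
       ((∃ b ∈ S, b ≠ a ∧ L b = Lab.OUT) ∨
        (∃ b₁ ∈ S, ∃ b₂ ∈ S, b₁ ≠ a ∧ b₂ ≠ a ∧ b₁ ≠ b₂ ∧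
          L b₁ = Lab.UNDEC ∧ L b₂ = Lab.UNDEC))))

/-- Definition 2, item 2: legally OUT. -/
def legallyOut (J : JSBAF A) (L : A → Lab) (a : A) : Prop :=
  (∃ b, J.att b a ∧ L b = Lab.IN) ∨
  (∃ (n : ℕ) (S : ℕ → Set A) (b : ℕ → A),
    (∀ i ≤ n, J.supp (S i) (b i)) ∧
    (∀ i < n, b i ∈ S (i + 1)) ∧
    a ∈ S 0 ∧
    (∀ d ∈ S 0, d ≠ a → L d = Lab.IN) ∧
    (∃ c, J.att c (b n) ∧ L c = Lab.IN) ∧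
    (∀ i ≤ n, L (b i) = Lab.OUT) ∧
    (∀ i, 1 ≤ i → i ≤ n → ∀ d ∈ S i, d ≠ b (i - 1) → L d = Lab.IN) ∧
    (∀ d ∈ S 0, d ≠ a → J.pref a d))

/-- Admissible labelings. -/
def Admissible (J : JSBAF A) (L : A → Lab) : Prop :=
  (∀ a, L a = Lab.IN → legallyIn J L a) ∧
  (∀ a, L a = Lab.OUT ↔ legallyOut J L a) ∧
  (∀ a, Strict J a → L a = Lab.IN)

/-- Preferred labelings: maximal admissible w.r.t. inclusion of IN-sets. -/
def Preferred (J : JSBAF A) (L : A → Lab) : Prop :=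
  Admissible J L ∧ ∀ L', Admissible J L' → ¬ (inL L ⊂ inL L')

/-- The iterated OUT-sets of the SIM labeling. -/
def simO (J : JSBAF A) : ℕ → Set A
  | 0 => {a | ∃ b, Strict J b ∧ J.att b a}
  | n + 1 => simO J n ∪
      {a | ∃ S c, J.supp S c ∧ a ∈ S ∧ c ∈ simO J n ∧ ∀ d ∈ S, d ≠ a → Strict J d}

def simIn (J : JSBAF A) : Set A := {a | Strict J a}
def simOut (J : JSBAF A) : Set A := ⋃ n, simO J n

open Classical in
/-- The strict-including-minimal labeling. -/
noncomputable def SIM (J : JSBAF A) : A → Lab := fun a =>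
  if Strict J a then Lab.IN else if a ∈ simOut J then Lab.OUT else Lab.UNDEC

/-- The order on labelings. -/
def leL (L₁ L₂ : A → Lab) : Prop := inL L₁ ⊆ inL L₂ ∧ outL L₁ ⊆ outL L₂

end JS

namespace JS

variable {A : Type} {J : JSBAF A}

theorem Strict.of_supp {S : Set A} {a c : A} (hsupp : J.supp S c) (ha : Strict J a)
    (hS : ∀ d ∈ S, d ≠ a → Strict J d) : Strict J c := by
  refine Strict.mk S c hsupp fun d hd => ?_
  by_cases hda : d = a
  · exact hda ▸ ha
  · exact hS d hd hda

theorem not_strict_of_mem_simO (hR : Restr J) :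
    ∀ {n : ℕ} {a : A}, a ∈ simO J n → ¬ Strict J a
  | 0, a, ⟨b, _, hba⟩, ha => hR.strictUnatt b a ha hba
  | _ + 1, _, .inl ha, hstrict => not_strict_of_mem_simO hR ha hstrict
  | _ + 1, _, .inr ⟨_, _, hsupp, _, hc, hS⟩, hstrict =>
    not_strict_of_mem_simO hR hc (Strict.of_supp hsupp hstrict hS)

theorem SIM_eq_IN_iff {a : A} : SIM J a = Lab.IN ↔ Strict J a := by
  unfold SIM
  split_ifs <;> simp_all

theorem SIM_eq_OUT_iff (hR : Restr J) {a : A} : SIM J a = Lab.OUT ↔ a ∈ simOut J := by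
  unfold SIM
  split_ifs with hstrict
  · refine iff_of_false (by simp) fun hout => ?_
    obtain ⟨n, hn⟩ := Set.mem_iUnion.mp hout
    exact not_strict_of_mem_simO hR hn hstrict
  all_goals simp_all

theorem legallyIn_SIM_of_strict (hR : Restr J) {a : A} (ha : Strict J a) :
    legallyIn J (SIM J) a := by
  refine ⟨fun b hba => absurd hba (hR.strictUnatt b a ha), fun S c hsupp _ hmin => ?_⟩
  refine Or.inl (SIM_eq_IN_iff.mpr (Strict.of_supp hsupp ha fun d hd hda => ?_))
  by_contra hnonstrict
  exact (hR.strictTop d a hnonstrict ha).2 (hmin d hd hda)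

theorem legallyOut_of_supp {L : A → Lab} {S : Set A} {a c : A} (hsupp : J.supp S c)
    (haS : a ∈ S) (hIN : ∀ d ∈ S, d ≠ a → L d = Lab.IN) (hmin : ∀ d ∈ S, d ≠ a → J.pref a d)
    (hc : L c = Lab.OUT) (hcout : legallyOut J L c) : legallyOut J L a := by
  rcases hcout with hattacked | ⟨n, T, b, hsupp', hchain, hcT, hIN', hattacked, hOUT, hIN'', -⟩
  · refine Or.inr ⟨0, fun _ => S, fun _ => c, fun _ _ => hsupp, fun _ h => absurd h (by omega),
      haS, hIN, hattacked, fun _ _ => hc, fun _ h h' => absurd h' (by omega), hmin⟩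
  · refine Or.inr ⟨n + 1, fun | 0 => S | i + 1 => T i, fun | 0 => c | i + 1 => b i,
      ?_, ?_, haS, hIN, hattacked, ?_, ?_, hmin⟩
    · rintro (_ | i) hi
      exacts [hsupp, hsupp' i (by omega)]
    · rintro (_ | i) hi
      exacts [hcT, hchain i (by omega)]
    · rintro (_ | i) hi
      exacts [hc, hOUT i (by omega)]
    · rintro (_ | _ | i) h1 hi d hd hne
      · omega
      · exact hIN' d hd hne
      · exact hIN'' (i + 1) (by omega) (by omega) d hd hne

theorem legallyOut_SIM_of_mem_simO (hR : Restr J) :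
    ∀ {n : ℕ} {a : A}, a ∈ simO J n → legallyOut J (SIM J) a
  | 0, _, ⟨b, hb, hba⟩ => Or.inl ⟨b, hba, SIM_eq_IN_iff.mpr hb⟩
  | _ + 1, _, .inl ha => legallyOut_SIM_of_mem_simO hR ha
  | n + 1, a, .inr ⟨S, c, hsupp, haS, hc, hS⟩ => by
    have ha : ¬ Strict J a :=
      not_strict_of_mem_simO hR (n := n + 1) (.inr ⟨S, c, hsupp, haS, hc, hS⟩)
    exact legallyOut_of_supp hsupp haS (fun d hd hda => SIM_eq_IN_iff.mpr (hS d hd hda))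
      (fun d hd hda => (hR.strictTop a d ha (hS d hd hda)).1)
      ((SIM_eq_OUT_iff hR).mpr (Set.mem_iUnion_of_mem n hc)) (legallyOut_SIM_of_mem_simO hR hc)

theorem mem_simOut_of_legallyOut_SIM {a : A} (h : legallyOut J (SIM J) a) : a ∈ simOut J := by
  rcases h with ⟨b, hba, hb⟩ | ⟨n, T, b, hsupp, hchain, haT, hIN, ⟨c, hcb, hc⟩, -, hIN', -⟩
  · exact Set.mem_iUnion_of_mem 0 ⟨b, SIM_eq_IN_iff.mp hb, hba⟩
  have hlink : ∀ k i, i + k = n → b i ∈ simO J k := by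
    intro k
    induction k with
    | zero => rintro i rfl; exact ⟨c, SIM_eq_IN_iff.mp hc, hcb⟩
    | succ k ih =>
      intro i hi
      refine .inr ⟨T (i + 1), b (i + 1), hsupp (i + 1) (by omega), hchain i (by omega),
        ih (i + 1) (by omega), fun d hd hne => SIM_eq_IN_iff.mp ?_⟩
      exact hIN' (i + 1) (by omega) (by omega) d hd hne
  exact Set.mem_iUnion_of_mem (n + 1) (.inr ⟨T 0, b 0, hsupp 0 (by omega), haT,
    hlink n 0 (by omega), fun d hd hne => SIM_eq_IN_iff.mp (hIN d hd hne)⟩)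

end JS

open JS in
/-- Every JSBAF satisfying the structural restrictions has at least one admissible
labeling. -/
theorem admissible_nonempty {A : Type} (J : JSBAF A) (hR : Restr J) :
    ∃ L : A → Lab, Admissible J L := by
  refine ⟨SIM J, fun a ha => ?_, fun a => ?_, fun a => SIM_eq_IN_iff.mpr⟩
  · exact legallyIn_SIM_of_strict hR (SIM_eq_IN_iff.mp ha)
  · rw [SIM_eq_OUT_iff hR]
    refine ⟨fun ha => ?_, mem_simOut_of_legallyOut_SIM⟩
    obtain ⟨n, hn⟩ := Set.mem_iUnion.mp ha
    exact legallyOut_SIM_of_mem_simO hR hn
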